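/- arXiv:1904.07479 — 2 statements merged into one kernel-verified Lean document; each statement's English description precedes it below -/
import Mathlib

section
/- With the setup of the first-order filter (T·d̂' = −d̂ + d, d̂(0)=0, d̃ = d̂ − d), if d'(t) → 0 as t → ∞, then d̃(t) → 0 as t → ∞. -/
/-!
The error `d̃ = d̂ - d` solves `d̃' = -(1/T) d̃ - d'`, so `g t = exp (t/T) • d̃ t` has
`‖g' t‖ = exp (t/T) ‖d' t‖`. Comparing `g` on `[t₀, t]` with the primitive of
`ε exp (s/T)`, where `‖d'‖ ≤ ε` beyond `t₀`, gives
`‖d̃ t‖ ≤ exp (-(t - t₀)/T) ‖d̃ t₀‖ + T ε`: the initial error decays and the remainder is as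
small as `d'` eventually is.
-/

open Filter Topology

section
variable {E : Type*} [NormedAddCommGroup E] [NormedSpace ℝ E]

theorem hasDerivAt_exp_mul_smul_of_hasDerivAt_neg_smul_add {e u : ℝ → E} {k t : ℝ}
    (he : HasDerivAt e (-k • e t + u t) t) :
    HasDerivAt (fun s => Real.exp (k * s) • e s) (Real.exp (k * t) • u t) t := by
  have hexp : HasDerivAt (fun s => Real.exp (k * s)) (Real.exp (k * t) * k) t := by
    simpa using ((hasDerivAt_id t).const_mul k).exp
  refine (hexp.smul he).congr_deriv ?_
  rw [smul_add, smul_smul, mul_neg, neg_smul]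
  abel

theorem norm_le_of_hasDerivAt_neg_smul_add {e u : ℝ → E} {k ε t₀ t : ℝ} (hk : 0 < k)
    (he : ∀ t, HasDerivAt e (-k • e t + u t) t) (hu : ∀ s ≥ t₀, ‖u s‖ ≤ ε) (ht : t₀ ≤ t) :
    ‖e t‖ ≤ Real.exp (-k * (t - t₀)) * ‖e t₀‖ + ε / k := by
  have hε : 0 ≤ ε := (norm_nonneg _).trans (hu t₀ le_rfl)
  set B : ℝ → ℝ := fun s =>
    Real.exp (k * t₀) * ‖e t₀‖ + ε / k * (Real.exp (k * s) - Real.exp (k * t₀))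
  have hB : ∀ s, HasDerivAt B (ε * Real.exp (k * s)) s := by
    intro s
    have hexp : HasDerivAt (fun s => Real.exp (k * s)) (Real.exp (k * s) * k) s := by
      simpa using ((hasDerivAt_id s).const_mul k).exp
    refine (((hexp.sub_const _).const_mul (ε / k)).const_add _).congr_deriv ?_
    field_simp
  have hg : ‖Real.exp (k * t) • e t‖ ≤ B t := by
    have hg' := fun s => hasDerivAt_exp_mul_smul_of_hasDerivAt_neg_smul_add (he s)
    refine image_norm_le_of_norm_deriv_right_le_deriv_boundary
      (fun s _ => (hg' s).continuousAt.continuousWithinAt) (fun s _ => (hg' s).hasDerivWithinAt)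
      (by simp [B, norm_smul]) hB (fun s hs => ?_) ⟨ht, le_rfl⟩
    rw [norm_smul, Real.norm_of_nonneg (Real.exp_pos _).le, mul_comm ε]
    exact mul_le_mul_of_nonneg_left (hu s hs.1) (Real.exp_pos _).le
  rw [norm_smul, Real.norm_of_nonneg (Real.exp_pos _).le] at hg
  have hpos := Real.exp_pos (k * t)
  rw [show -k * (t - t₀) = k * t₀ - k * t by ring, Real.exp_sub, div_mul_eq_mul_div,
    div_add' _ _ _ hpos.ne', le_div_iff₀ hpos]
  have : 0 ≤ ε / k * Real.exp (k * t₀) := by positivity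
  simp only [B] at hg
  linarith

theorem tendsto_zero_of_hasDerivAt_neg_smul_add {e u : ℝ → E} {k : ℝ} (hk : 0 < k)
    (he : ∀ t, HasDerivAt e (-k • e t + u t) t) (hu : Tendsto u atTop (𝓝 0)) :
    Tendsto e atTop (𝓝 0) := by
  rw [Metric.tendsto_nhds]
  intro ε hε
  have hkε : 0 < k * ε / 2 := by positivity
  obtain ⟨t₀, ht₀⟩ := eventually_atTop.mp
    ((tendsto_zero_iff_norm_tendsto_zero.mp hu).eventually (eventually_le_nhds hkε))
  have hdecay : Tendsto (fun t => Real.exp (-k * (t - t₀)) * ‖e t₀‖) atTop (𝓝 0) := by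
    have hlin : Tendsto (fun t => -k * (t - t₀)) atTop atBot :=
      (tendsto_atTop_add_const_right _ (-t₀) tendsto_id).const_mul_atTop_of_neg
        (neg_neg_of_pos hk)
    simpa using (Real.tendsto_exp_atBot.comp hlin).mul_const ‖e t₀‖
  filter_upwards [eventually_ge_atTop t₀, hdecay.eventually (eventually_lt_nhds (half_pos hε))]
    with t ht hsmall
  rw [dist_zero_right]
  calc ‖e t‖ ≤ Real.exp (-k * (t - t₀)) * ‖e t₀‖ + k * ε / 2 / k :=
        norm_le_of_hasDerivAt_neg_smul_add hk he ht₀ ht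
    _ < ε / 2 + ε / 2 := by rw [mul_div_assoc, mul_div_cancel_left₀ _ hk.ne']; gcongr
    _ = ε := add_halves ε

end

theorem stmt_2_general
    (d d' dhat dhat' : ℝ → ℝ) (T : ℝ)
    (hT : 0 < T)
    (hd : ∀ t, HasDerivAt d (d' t) t)
    (hdhat : ∀ t, HasDerivAt dhat (dhat' t) t)
    (hfilter : ∀ t, T * dhat' t = -dhat t + d t)
    (hlim : Tendsto d' atTop (nhds 0)) :
    Tendsto (fun t => dhat t - d t) atTop (nhds 0) := by
  refine tendsto_zero_of_hasDerivAt_neg_smul_add (inv_pos.mpr hT) (u := fun t => -d' t)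
    (fun t => ((hdhat t).sub (hd t)).congr_deriv ?_) (by simpa using hlim.neg)
  have hdhat' : dhat' t = T⁻¹ * (-dhat t + d t) := by
    rw [← hfilter t, inv_mul_cancel_left₀ hT.ne']
  rw [hdhat', smul_eq_mul]
  ring

/-- First-order filter: if `d'(t) → 0` as `t → ∞`, then the estimation error
`d̃ = d̂ - d` tends to `0` as `t → ∞`. -/
theorem stmt_2
    (d d' dhat dhat' : ℝ → ℝ) (T M : ℝ)
    (hT : 0 < T)
    (hd : ∀ t, HasDerivAt d (d' t) t)
    (hd' : ∀ t, |d' t| ≤ M)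
    (hdhat : ∀ t, HasDerivAt dhat (dhat' t) t)
    (hfilter : ∀ t, T * dhat' t = -dhat t + d t)
    (h0 : dhat 0 = 0)
    (hlim : Tendsto d' atTop (nhds 0)) :
    Tendsto (fun t => dhat t - d t) atTop (nhds 0) :=
  stmt_2_general d d' dhat dhat' T hT hd hdhat hfilter hlim
end

section
/- Consider the augmented inner-loop error system ε' = −K_Θ ε + G e − d̃_Θ, e' = −K_Ω e − C_Ω Gᵀ ε − d̃_τ, d̃_Θ' = −T_Θ^{−1} d̃_Θ, d̃_τ' = −T_Ω^{−1} d̃_τ, where K_Θ, K_Ω, C_Ω, T_Θ, T_Ω are positive-definite diagonal 3×3 matrices and G : ℝ≥0 → ℝ^{3×3} is continuous and bounded. If all diagonal entries satisfy K_i > 0, T_i > 0, c_i > 0 and additionally the quadratic forms K_i x² − x y + (1/T_i) y² are positive definite, then V = ½εᵀε + ½eᵀC_Ω^{−1}e + ½d̃_Θᵀd̃_Θ + ½d̃_τᵀC_Ω^{−1}d̃_τ satisfies V' < 0 away from the origin, and ε(t), e(t), d̃_Θ(t), d̃_τ(t) all converge to 0 as t → ∞. -/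
/-!
Write `V` as a weighted sum of squares. Along a trajectory the coupling terms `εᵀ G e` and
`eᵀ C⁻¹ (C Gᵀ ε) = eᵀ Gᵀ ε` cancel, so `-V'` is a sum over the coordinates of the binary forms
`K x² + x y + T⁻¹ y²` evaluated at `(ε_i, d̃Θ_i)` and, weighted by `c_i⁻¹`, at `(e_i, d̃τ_i)`.
These are the hypothesised positive definite forms after `y ↦ -y`, so each dominates
`m (x² + y²)` for one `m > 0`, which gives `V' ≤ -2 m V`. Hence `V' < 0` wherever `V > 0`,
and `V` decays exponentially, taking every error signal with it.
-/

open Matrix Filter Topology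

theorem eventually_mul_le_of_quadratic_pos {a b d : ℝ}
    (h : ∀ x y : ℝ, ¬(x = 0 ∧ y = 0) → 0 < a * x ^ 2 + b * x * y + d * y ^ 2) :
    ∀ᶠ m in 𝓝[>] 0, ∀ x y : ℝ, m * (x ^ 2 + y ^ 2) ≤ a * x ^ 2 + b * x * y + d * y ^ 2 := by
  have ha : 0 < a := by simpa using h 1 0
  have hd : 0 < d := by simpa using h 0 1
  have hdisc : 0 < 4 * a * d - b ^ 2 := by
    -- the form equals `a (4ad - b²)` at `(-b, 2a)`
    have := h (-b) (2 * a) fun hxy => ha.ne' (by linarith [hxy.2])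
    nlinarith
  -- below this threshold, `(a - m) x² + b x y + (d - m) y²` still has nonpositive discriminant
  have hm₀ : 0 < (4 * a * d - b ^ 2) / (4 * (a + d)) := by positivity
  filter_upwards [Ioo_mem_nhdsGT hm₀] with m ⟨hm, hm'⟩ x y
  rw [lt_div_iff₀ (by positivity)] at hm'
  have ham : 0 < a - m := by nlinarith
  have hdiscm : b ^ 2 ≤ 4 * (a - m) * (d - m) := by nlinarith
  nlinarith [sq_nonneg (2 * (a - m) * x + b * y), mul_nonneg (sub_nonneg.2 hdiscm) (sq_nonneg y)]

theorem tendsto_zero_of_hasDerivAt_le_neg_mul {V V' : ℝ → ℝ} {α : ℝ} (hα : 0 < α)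
    (hV : ∀ t, HasDerivAt V (V' t) t) (hV' : ∀ t, V' t ≤ -α * V t) (hV₀ : ∀ t, 0 ≤ V t) :
    Tendsto V atTop (𝓝 0) := by
  have hanti : Antitone fun t => V t * Real.exp (t * α) := by
    refine antitone_of_hasDerivAt_nonpos (f' := fun t => (V' t + α * V t) * Real.exp (t * α))
      (fun t => ((hV t).mul (hasDerivAt_mul_const α).exp).congr_deriv (by ring)) fun t => ?_
    exact mul_nonpos_of_nonpos_of_nonneg (by linarith [hV' t]) (Real.exp_pos _).le
  have hbound : ∀ t, 0 ≤ t → V t ≤ V 0 * Real.exp (-(t * α)) := fun t ht => by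
    have := hanti ht
    simp only [zero_mul, Real.exp_zero, mul_one] at this
    rw [Real.exp_neg, ← div_eq_mul_inv, le_div_iff₀ (Real.exp_pos _)]
    exact this
  refine squeeze_zero' (Eventually.of_forall hV₀) (eventually_atTop.2 ⟨0, hbound⟩) ?_
  simpa using (Real.tendsto_exp_neg_atTop_nhds_zero.comp
    (tendsto_id.atTop_mul_const hα)).const_mul (V 0)

section WeightedSquares

variable {ι R : Type*} [Fintype ι] [DecidableEq ι]

theorem dotProduct_self_eq_dotProduct_diagonal_one_mulVec [CommSemiring R] (x : ι → R) :
    x ⬝ᵥ x = x ⬝ᵥ diagonal 1 *ᵥ x := by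
  rw [diagonal_one', one_mulVec]

theorem dotProduct_diagonal_mulVec_self [CommSemiring R] (w x : ι → R) :
    x ⬝ᵥ diagonal w *ᵥ x = ∑ i, w i * x i ^ 2 := by
  simp only [dotProduct, mulVec_diagonal]
  exact Finset.sum_congr rfl fun i _ => by ring

variable [CommRing R] [LinearOrder R] [IsStrictOrderedRing R]

theorem dotProduct_diagonal_mulVec_self_nonneg {w : ι → R} (hw : ∀ i, 0 ≤ w i) (x : ι → R) :
    0 ≤ x ⬝ᵥ diagonal w *ᵥ x := by
  rw [dotProduct_diagonal_mulVec_self]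
  exact Finset.sum_nonneg fun i _ => mul_nonneg (hw i) (sq_nonneg _)

theorem dotProduct_diagonal_mulVec_self_eq_zero {w : ι → R} (hw : ∀ i, 0 < w i) {x : ι → R} :
    x ⬝ᵥ diagonal w *ᵥ x = 0 ↔ x = 0 := by
  rw [dotProduct_diagonal_mulVec_self,
    Finset.sum_eq_zero_iff_of_nonneg fun i _ => mul_nonneg (hw i).le (sq_nonneg _)]
  simp [funext_iff, (hw _).ne']

theorem sq_le_mul_dotProduct_diagonal_mulVec_self {w : ι → ℝ} (hw : ∀ i, 0 < w i)
    (x : ι → ℝ) (i : ι) : x i ^ 2 ≤ (w i)⁻¹ * (x ⬝ᵥ diagonal w *ᵥ x) := by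
  rw [le_inv_mul_iff₀ (hw i), dotProduct_diagonal_mulVec_self]
  exact Finset.single_le_sum (f := fun j => w j * x j ^ 2)
    (fun j _ => mul_nonneg (hw j).le (sq_nonneg _)) (Finset.mem_univ i)

theorem tendsto_zero_of_dotProduct_diagonal_mulVec_self {α : Type*} {l : Filter α}
    {w : ι → ℝ} (hw : ∀ i, 0 < w i) {x : α → ι → ℝ}
    (hx : Tendsto (fun a => x a ⬝ᵥ diagonal w *ᵥ x a) l (𝓝 0)) : Tendsto x l (𝓝 0) := by
  refine tendsto_pi_nhds.2 fun i => ?_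
  have hsq : Tendsto (fun a => x a i ^ 2) l (𝓝 0) :=
    squeeze_zero (fun a => sq_nonneg _)
      (fun a => sq_le_mul_dotProduct_diagonal_mulVec_self hw (x a) i)
      (by simpa using hx.const_mul (w i)⁻¹)
  refine (tendsto_zero_iff_abs_tendsto_zero _).2 ?_
  simpa [Function.comp_def, Real.sqrt_sq_eq_abs] using
    (Real.continuous_sqrt.tendsto' 0 0 Real.sqrt_zero).comp hsq

theorem HasDerivAt.dotProduct_diagonal_mulVec_self {x : ℝ → ι → ℝ} {x' : ι → ℝ} {t : ℝ}
    (w : ι → ℝ) (hx : HasDerivAt x x' t) :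
    HasDerivAt (fun s => x s ⬝ᵥ diagonal w *ᵥ x s) (2 * (x t ⬝ᵥ diagonal w *ᵥ x')) t := by
  simp_rw [_root_.dotProduct_diagonal_mulVec_self]
  rw [dotProduct, Finset.mul_sum]
  refine HasDerivAt.fun_sum fun i _ => ?_
  refine (((hasDerivAt_pi.1 hx i).pow 2).const_mul (w i)).congr_deriv ?_
  rw [mulVec_diagonal]
  push_cast
  ring

end WeightedSquares

section ErrorSystem

variable {ι : Type*} [Fintype ι] [DecidableEq ι]

noncomputable def errorLyapunov (c ε e dΘ dτ : ι → ℝ) : ℝ :=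
  (1/2) * (ε ⬝ᵥ ε) + (1/2) * (e ⬝ᵥ (diagonal fun i => (c i)⁻¹) *ᵥ e)
    + (1/2) * (dΘ ⬝ᵥ dΘ) + (1/2) * (dτ ⬝ᵥ (diagonal fun i => (c i)⁻¹) *ᵥ dτ)

noncomputable def errorDissipation (kΘ kΩ c TΘ TΩ ε e dΘ dτ : ι → ℝ) : ℝ :=
  ∑ i, ((kΘ i * ε i ^ 2 + ε i * dΘ i + (TΘ i)⁻¹ * dΘ i ^ 2)
    + (c i)⁻¹ * (kΩ i * e i ^ 2 + e i * dτ i + (TΩ i)⁻¹ * dτ i ^ 2))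

theorem hasDerivAt_errorLyapunov {kΘ kΩ c TΘ TΩ : ι → ℝ} (hc : ∀ i, c i ≠ 0)
    {G : Matrix ι ι ℝ} {ε e dΘ dτ : ℝ → ι → ℝ} {t : ℝ}
    (hε : HasDerivAt ε (-(diagonal kΘ *ᵥ ε t) + G *ᵥ e t - dΘ t) t)
    (he : HasDerivAt e (-(diagonal kΩ *ᵥ e t) - diagonal c *ᵥ (Gᵀ *ᵥ ε t) - dτ t) t)
    (hdΘ : HasDerivAt dΘ (-((diagonal fun i => (TΘ i)⁻¹) *ᵥ dΘ t)) t)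
    (hdτ : HasDerivAt dτ (-((diagonal fun i => (TΩ i)⁻¹) *ᵥ dτ t)) t) :
    HasDerivAt (fun s => errorLyapunov c (ε s) (e s) (dΘ s) (dτ s))
      (-errorDissipation kΘ kΩ c TΘ TΩ (ε t) (e t) (dΘ t) (dτ t)) t := by
  simp only [errorLyapunov, errorDissipation, dotProduct_self_eq_dotProduct_diagonal_one_mulVec]
  refine (((((hε.dotProduct_diagonal_mulVec_self 1).const_mul _).fun_add
    ((he.dotProduct_diagonal_mulVec_self _).const_mul _)).fun_add
    ((hdΘ.dotProduct_diagonal_mulVec_self 1).const_mul _)).fun_add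
    ((hdτ.dotProduct_diagonal_mulVec_self _).const_mul _)).congr_deriv ?_
  have hcross : e t ⬝ᵥ (diagonal fun i => (c i)⁻¹) *ᵥ (diagonal c *ᵥ (Gᵀ *ᵥ ε t))
      = ε t ⬝ᵥ G *ᵥ e t := by
    rw [mulVec_mulVec, diagonal_mul_diagonal]
    simp only [inv_mul_cancel₀ (hc _), diagonal_one, one_mulVec]
    rw [dotProduct_mulVec, vecMul_transpose, dotProduct_comm]
  simp only [mulVec_add, mulVec_sub, mulVec_neg, dotProduct_add, dotProduct_sub,
    dotProduct_neg, hcross]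
  simp only [dotProduct, mulVec_diagonal, Pi.one_apply, Finset.mul_sum, ← Finset.sum_neg_distrib,
    ← Finset.sum_sub_distrib, ← Finset.sum_add_distrib]
  exact Finset.sum_congr rfl fun i _ => by ring

variable {c : ι → ℝ}

theorem errorLyapunov_eq_sum (c ε e dΘ dτ : ι → ℝ) :
    errorLyapunov c ε e dΘ dτ
      = (1/2) * ∑ i, (ε i ^ 2 + (c i)⁻¹ * e i ^ 2 + dΘ i ^ 2 + (c i)⁻¹ * dτ i ^ 2) := by
  simp only [errorLyapunov, dotProduct_self_eq_dotProduct_diagonal_one_mulVec,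
    dotProduct_diagonal_mulVec_self, Pi.one_apply, Finset.mul_sum, ← Finset.sum_add_distrib]
  exact Finset.sum_congr rfl fun i _ => by ring

theorem two_mul_errorLyapunov_le_errorDissipation {kΘ kΩ TΘ TΩ : ι → ℝ} {m : ℝ}
    (hc : ∀ i, 0 < c i)
    (hΘ : ∀ i x y, m * (x ^ 2 + y ^ 2) ≤ kΘ i * x ^ 2 + x * y + (TΘ i)⁻¹ * y ^ 2)
    (hΩ : ∀ i x y, m * (x ^ 2 + y ^ 2) ≤ kΩ i * x ^ 2 + x * y + (TΩ i)⁻¹ * y ^ 2)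
    (ε e dΘ dτ : ι → ℝ) :
    2 * m * errorLyapunov c ε e dΘ dτ ≤ errorDissipation kΘ kΩ c TΘ TΩ ε e dΘ dτ := by
  rw [errorLyapunov_eq_sum, errorDissipation, ← mul_assoc, mul_assoc 2, mul_comm m,
    ← mul_assoc, show (2 : ℝ) * (1/2) = 1 by norm_num, one_mul, Finset.mul_sum]
  refine Finset.sum_le_sum fun i _ => ?_
  have hΩ' := mul_le_mul_of_nonneg_left (hΩ i (e i) (dτ i)) (inv_pos.2 (hc i)).le
  nlinarith [hΘ i (ε i) (dΘ i)]

theorem errorLyapunov_eq_diagonal_one (c ε e dΘ dτ : ι → ℝ) :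
    errorLyapunov c ε e dΘ dτ
      = (1/2) * (ε ⬝ᵥ diagonal 1 *ᵥ ε) + (1/2) * (e ⬝ᵥ (diagonal fun i => (c i)⁻¹) *ᵥ e)
        + (1/2) * (dΘ ⬝ᵥ diagonal 1 *ᵥ dΘ)
        + (1/2) * (dτ ⬝ᵥ (diagonal fun i => (c i)⁻¹) *ᵥ dτ) := by
  simp only [errorLyapunov, dotProduct_self_eq_dotProduct_diagonal_one_mulVec]

theorem errorLyapunov_nonneg (hc : ∀ i, 0 < c i) (ε e dΘ dτ : ι → ℝ) :
    0 ≤ errorLyapunov c ε e dΘ dτ := by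
  have hc' : ∀ i, 0 ≤ (c i)⁻¹ := fun i => (inv_pos.2 (hc i)).le
  have hone : ∀ i : ι, (0 : ℝ) ≤ (1 : ι → ℝ) i := fun _ => zero_le_one
  rw [errorLyapunov_eq_diagonal_one]
  have := dotProduct_diagonal_mulVec_self_nonneg hone ε
  have := dotProduct_diagonal_mulVec_self_nonneg hc' e
  have := dotProduct_diagonal_mulVec_self_nonneg hone dΘ
  have := dotProduct_diagonal_mulVec_self_nonneg hc' dτ
  linarith

theorem errorLyapunov_pos (hc : ∀ i, 0 < c i) {ε e dΘ dτ : ι → ℝ}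
    (h : ¬(ε = 0 ∧ e = 0 ∧ dΘ = 0 ∧ dτ = 0)) : 0 < errorLyapunov c ε e dΘ dτ := by
  have hc' : ∀ i, 0 < (c i)⁻¹ := fun i => inv_pos.2 (hc i)
  have hone : ∀ i : ι, (0 : ℝ) < (1 : ι → ℝ) i := fun _ => one_pos
  rw [errorLyapunov_eq_diagonal_one]
  have := dotProduct_diagonal_mulVec_self_nonneg (fun i => (hone i).le) ε
  have := dotProduct_diagonal_mulVec_self_nonneg (fun i => (hc' i).le) e
  have := dotProduct_diagonal_mulVec_self_nonneg (fun i => (hone i).le) dΘ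
  have := dotProduct_diagonal_mulVec_self_nonneg (fun i => (hc' i).le) dτ
  by_contra hle
  exact h ⟨(dotProduct_diagonal_mulVec_self_eq_zero hone).1 (by linarith),
    (dotProduct_diagonal_mulVec_self_eq_zero hc').1 (by linarith),
    (dotProduct_diagonal_mulVec_self_eq_zero hone).1 (by linarith),
    (dotProduct_diagonal_mulVec_self_eq_zero hc').1 (by linarith)⟩

theorem tendsto_zero_of_errorLyapunov {α : Type*} {l : Filter α} (hc : ∀ i, 0 < c i)
    {ε e dΘ dτ : α → ι → ℝ}
    (h : Tendsto (fun a => errorLyapunov c (ε a) (e a) (dΘ a) (dτ a)) l (𝓝 0)) :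
    Tendsto ε l (𝓝 0) ∧ Tendsto e l (𝓝 0) ∧ Tendsto dΘ l (𝓝 0) ∧ Tendsto dτ l (𝓝 0) := by
  have hc' : ∀ i, 0 < (c i)⁻¹ := fun i => inv_pos.2 (hc i)
  have hone : ∀ i : ι, (0 : ℝ) < (1 : ι → ℝ) i := fun _ => one_pos
  have of_le {w : ι → ℝ} (hw : ∀ i, 0 < w i) {x : α → ι → ℝ}
      (hle : ∀ a, x a ⬝ᵥ diagonal w *ᵥ x a ≤ 2 * errorLyapunov c (ε a) (e a) (dΘ a) (dτ a)) :
      Tendsto x l (𝓝 0) :=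
    tendsto_zero_of_dotProduct_diagonal_mulVec_self hw <|
      squeeze_zero (fun a => dotProduct_diagonal_mulVec_self_nonneg (fun i => (hw i).le) _) hle
        (by simpa using h.const_mul 2)
  have h₁ := fun a => dotProduct_diagonal_mulVec_self_nonneg (fun i => (hone i).le) (ε a)
  have h₂ := fun a => dotProduct_diagonal_mulVec_self_nonneg (fun i => (hc' i).le) (e a)
  have h₃ := fun a => dotProduct_diagonal_mulVec_self_nonneg (fun i => (hone i).le) (dΘ a)
  have h₄ := fun a => dotProduct_diagonal_mulVec_self_nonneg (fun i => (hc' i).le) (dτ a)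
  refine ⟨of_le hone fun a => ?_, of_le hc' fun a => ?_, of_le hone fun a => ?_,
    of_le hc' fun a => ?_⟩ <;>
  · rw [errorLyapunov_eq_diagonal_one]
    linarith [h₁ a, h₂ a, h₃ a, h₄ a]

end ErrorSystem

theorem stmt_11_general
    (kΘ kΩ c TΘ TΩ : Fin 3 → ℝ)
    (hc : ∀ i, 0 < c i)
    (hpdΘ : ∀ i, ∀ x y : ℝ, ¬(x = 0 ∧ y = 0) →
      kΘ i * x^2 - x*y + (TΘ i)⁻¹ * y^2 > 0)
    (hpdΩ : ∀ i, ∀ x y : ℝ, ¬(x = 0 ∧ y = 0) →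
      kΩ i * x^2 - x*y + (TΩ i)⁻¹ * y^2 > 0)
    (G : ℝ → Matrix (Fin 3) (Fin 3) ℝ)
    (ε e dΘ dτ : ℝ → Fin 3 → ℝ)
    (hε : ∀ t, HasDerivAt ε
      (-(diagonal kΘ).mulVec (ε t) + (G t).mulVec (e t) - dΘ t) t)
    (he : ∀ t, HasDerivAt e
      (-(diagonal kΩ).mulVec (e t) - (diagonal c).mulVec ((G t)ᵀ.mulVec (ε t))
        - dτ t) t)
    (hdΘ : ∀ t, HasDerivAt dΘ (-(diagonal fun i => (TΘ i)⁻¹).mulVec (dΘ t)) t)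
    (hdτ : ∀ t, HasDerivAt dτ (-(diagonal fun i => (TΩ i)⁻¹).mulVec (dτ t)) t)
    (V : ℝ → ℝ)
    (hV : ∀ t, V t = (1/2) * (ε t ⬝ᵥ ε t)
      + (1/2) * (e t ⬝ᵥ (diagonal fun i => (c i)⁻¹).mulVec (e t))
      + (1/2) * (dΘ t ⬝ᵥ dΘ t)
      + (1/2) * (dτ t ⬝ᵥ (diagonal fun i => (c i)⁻¹).mulVec (dτ t))) :
    (∀ t, ¬(ε t = 0 ∧ e t = 0 ∧ dΘ t = 0 ∧ dτ t = 0) → deriv V t < 0) ∧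
    Tendsto ε atTop (nhds 0) ∧ Tendsto e atTop (nhds 0) ∧
    Tendsto dΘ atTop (nhds 0) ∧ Tendsto dτ atTop (nhds 0) := by
  obtain rfl : V = fun t => errorLyapunov c (ε t) (e t) (dΘ t) (dτ t) := funext hV
  have hflip {k T : ℝ}
      (h : ∀ x y : ℝ, ¬(x = 0 ∧ y = 0) → k * x^2 - x*y + T⁻¹ * y^2 > 0) :
      ∀ x y : ℝ, ¬(x = 0 ∧ y = 0) → 0 < k * x ^ 2 + 1 * x * y + T⁻¹ * y ^ 2 :=
    fun x y hxy => by simpa using h x (-y) (by simpa using hxy)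
  obtain ⟨m, hcoercive, hm⟩ := ((eventually_all.2 fun i =>
    (eventually_mul_le_of_quadratic_pos (hflip (hpdΘ i))).and
      (eventually_mul_le_of_quadratic_pos (hflip (hpdΩ i)))).and self_mem_nhdsWithin).exists
  simp only [one_mul] at hcoercive
  have hderiv := fun t =>
    hasDerivAt_errorLyapunov (fun i => (hc i).ne') (hε t) (he t) (hdΘ t) (hdτ t)
  have hdecay := fun t => two_mul_errorLyapunov_le_errorDissipation hc
    (fun i => (hcoercive i).1) (fun i => (hcoercive i).2) (ε t) (e t) (dΘ t) (dτ t)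
  refine ⟨fun t ht => ?_, tendsto_zero_of_errorLyapunov hc <|
    tendsto_zero_of_hasDerivAt_le_neg_mul (α := 2 * m) (by positivity) hderiv
      (fun t => by linarith [hdecay t]) fun t => errorLyapunov_nonneg hc _ _ _ _⟩
  rw [(hderiv t).deriv]
  nlinarith [hdecay t, errorLyapunov_pos hc ht, hm]

/-- Augmented inner-loop error system with disturbance-observer errors:
if each block `[[K_i, -1/2],[-1/2, 1/T_i]]` is positive definite, the Lyapunov
function `V` is strictly decreasing away from the origin and all error signals
converge to zero. -/
theorem stmt_11
    (kΘ kΩ c TΘ TΩ : Fin 3 → ℝ)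
    (hkΘ : ∀ i, 0 < kΘ i) (hkΩ : ∀ i, 0 < kΩ i) (hc : ∀ i, 0 < c i)
    (hTΘ : ∀ i, 0 < TΘ i) (hTΩ : ∀ i, 0 < TΩ i)
    (hpdΘ : ∀ i, ∀ x y : ℝ, ¬(x = 0 ∧ y = 0) →
      kΘ i * x^2 - x*y + (TΘ i)⁻¹ * y^2 > 0)
    (hpdΩ : ∀ i, ∀ x y : ℝ, ¬(x = 0 ∧ y = 0) →
      kΩ i * x^2 - x*y + (TΩ i)⁻¹ * y^2 > 0)
    (G : ℝ → Matrix (Fin 3) (Fin 3) ℝ)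
    (hGcont : Continuous G) (MG : ℝ) (hGbdd : ∀ t i j, |G t i j| ≤ MG)
    (ε e dΘ dτ : ℝ → Fin 3 → ℝ)
    (hε : ∀ t, HasDerivAt ε
      (-(diagonal kΘ).mulVec (ε t) + (G t).mulVec (e t) - dΘ t) t)
    (he : ∀ t, HasDerivAt e
      (-(diagonal kΩ).mulVec (e t) - (diagonal c).mulVec ((G t)ᵀ.mulVec (ε t))
        - dτ t) t)
    (hdΘ : ∀ t, HasDerivAt dΘ (-(diagonal fun i => (TΘ i)⁻¹).mulVec (dΘ t)) t)
    (hdτ : ∀ t, HasDerivAt dτ (-(diagonal fun i => (TΩ i)⁻¹).mulVec (dτ t)) t)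
    (V : ℝ → ℝ)
    (hV : ∀ t, V t = (1/2) * (ε t ⬝ᵥ ε t)
      + (1/2) * (e t ⬝ᵥ (diagonal fun i => (c i)⁻¹).mulVec (e t))
      + (1/2) * (dΘ t ⬝ᵥ dΘ t)
      + (1/2) * (dτ t ⬝ᵥ (diagonal fun i => (c i)⁻¹).mulVec (dτ t))) :
    (∀ t, ¬(ε t = 0 ∧ e t = 0 ∧ dΘ t = 0 ∧ dτ t = 0) → deriv V t < 0) ∧
    Tendsto ε atTop (nhds 0) ∧ Tendsto e atTop (nhds 0) ∧
    Tendsto dΘ atTop (nhds 0) ∧ Tendsto dτ atTop (nhds 0) :=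
  stmt_11_general kΘ kΩ c TΘ TΩ hc hpdΘ hpdΩ G ε e dΘ dτ hε he hdΘ hdτ V hV
end
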